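/- arXiv:2105.14882 — 2 statements merged into one kernel-verified Lean document; each statement's English description precedes it below -/
import Mathlib

section
/- Let g : Fin M → Fin M (with M ≥ 1) be an injective function such that |g(i+1) - g(i)| ≤ 1 for all consecutive indices. Then either g(i) = i for all i, or g(i) = M - 1 - i for all i (using 0-indexing). -/
theorem stmt_1 (M : ℕ) (hM : 1 ≤ M) (g : Fin M → Fin M)
    (hinj : Function.Injective g)
    (hstep : ∀ (i : ℕ) (h : i + 1 < M),
      |((g ⟨i + 1, h⟩ : ℕ) : ℤ) - ((g ⟨i, Nat.lt_of_succ_lt h⟩ : ℕ) : ℤ)| ≤ 1) :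
    (∀ i : Fin M, (g i : ℕ) = (i : ℕ)) ∨ (∀ i : Fin M, (g i : ℕ) = M - 1 - (i : ℕ)) := by
  rcases Nat.lt_or_ge 1 M with hM2 | hM1
  swap
  · left
    intro i
    have h1 := (g i).isLt
    have h2 := i.isLt
    omega
  -- each step is ±1
  have hpm : ∀ (i : ℕ) (h : i + 1 < M),
      ((g ⟨i + 1, h⟩ : ℕ) : ℤ) - ((g ⟨i, Nat.lt_of_succ_lt h⟩ : ℕ) : ℤ) = 1 ∨
      ((g ⟨i + 1, h⟩ : ℕ) : ℤ) - ((g ⟨i, Nat.lt_of_succ_lt h⟩ : ℕ) : ℤ) = -1 := by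
    intro i h
    have h1 := hstep i h
    have hne : g ⟨i + 1, h⟩ ≠ g ⟨i, Nat.lt_of_succ_lt h⟩ := by
      intro heq
      have := hinj heq
      simp [Fin.ext_iff] at this
    have hne' : ((g ⟨i + 1, h⟩ : ℕ) : ℤ) ≠ ((g ⟨i, Nat.lt_of_succ_lt h⟩ : ℕ) : ℤ) := by
      intro heq
      exact hne (Fin.ext (by exact_mod_cast heq))
    rw [abs_le] at h1
    omega
  -- consecutive steps are equal
  have hcons : ∀ (i : ℕ) (h : i + 2 < M),
      ((g ⟨i + 2, h⟩ : ℕ) : ℤ) - ((g ⟨i + 1, Nat.lt_of_succ_lt h⟩ : ℕ) : ℤ) =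
      ((g ⟨i + 1, Nat.lt_of_succ_lt h⟩ : ℕ) : ℤ) - ((g ⟨i, by omega⟩ : ℕ) : ℤ) := by
    intro i h
    have h1 := hpm (i + 1) h
    rw [show (⟨i + 1 + 1, h⟩ : Fin M) = ⟨i + 2, h⟩ from rfl] at h1
    have h2 := hpm i (Nat.lt_of_succ_lt h)
    have hne : g ⟨i + 2, h⟩ ≠ g ⟨i, by omega⟩ := by
      intro heq
      have := hinj heq
      simp [Fin.ext_iff] at this
    have hne' : ((g ⟨i + 2, h⟩ : ℕ) : ℤ) ≠ ((g ⟨i, by omega⟩ : ℕ) : ℤ) := by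
      intro heq
      exact hne (Fin.ext (by exact_mod_cast heq))
    omega
  set d : ℤ := ((g ⟨1, hM2⟩ : ℕ) : ℤ) - ((g ⟨0, by omega⟩ : ℕ) : ℤ) with hd
  have hstepd : ∀ (i : ℕ) (h : i + 1 < M),
      ((g ⟨i + 1, h⟩ : ℕ) : ℤ) - ((g ⟨i, Nat.lt_of_succ_lt h⟩ : ℕ) : ℤ) = d := by
    intro i
    induction i with
    | zero => intro h; rfl
    | succ n ih =>
      intro h
      have := hcons n h
      rw [show (⟨n + 1 + 1, h⟩ : Fin M) = ⟨n + 2, h⟩ from rfl, this]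
      exact ih (by omega)
  have hval : ∀ (i : ℕ) (h : i < M),
      ((g ⟨i, h⟩ : ℕ) : ℤ) = ((g ⟨0, by omega⟩ : ℕ) : ℤ) + d * i := by
    intro i
    induction i with
    | zero => intro h; simp
    | succ n ih =>
      intro h
      have h1 := hstepd n h
      have h2 := ih (by omega)
      push_cast
      push_cast at h2
      linarith
  have hd1 := hpm 0 hM2
  have hg0 := (g ⟨0, by omega⟩).isLt
  have hlast : ((g ⟨M - 1, by omega⟩ : ℕ) : ℤ) = ((g ⟨0, by omega⟩ : ℕ) : ℤ) + d * (M - 1 : ℕ) :=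
    hval (M - 1) (by omega)
  have hlastlt := (g ⟨M - 1, by omega⟩).isLt
  rcases hd1 with h1 | h1
  · left
    intro i
    have := hval i.val i.isLt
    simp only [Fin.eta] at this
    rw [← hd] at h1
    simp only [h1, one_mul, neg_one_mul] at this hlast
    have hi2 := i.isLt
    omega
  · right
    intro i
    have := hval i.val i.isLt
    simp only [Fin.eta] at this
    rw [← hd] at h1
    simp only [h1, one_mul, neg_one_mul] at this hlast
    have hi2 := i.isLt
    omega
end

section
/- Let a, b : Fin T → ℕ be nondecreasing sequences with values in [jm, (j+1)m] for positive integers j, m. Then there is at most one ℓ ∈ [1, m] such that at some time t, simultaneously a(t) = jm + ℓ and b(t) = (j+1)m + 1 - ℓ. -/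
theorem stmt_3 (T j m : ℕ) (hj : 1 ≤ j) (hm : 1 ≤ m)
    (a b : Fin T → ℕ) (ha : Monotone a) (hb : Monotone b)
    (hra : ∀ t, j * m ≤ a t ∧ a t ≤ (j + 1) * m)
    (hrb : ∀ t, j * m ≤ b t ∧ b t ≤ (j + 1) * m)
    (ℓ₁ ℓ₂ : ℕ) (h1 : ℓ₁ ∈ Finset.Icc 1 m) (h2 : ℓ₂ ∈ Finset.Icc 1 m)
    (ht1 : ∃ t, a t = j * m + ℓ₁ ∧ b t = (j + 1) * m + 1 - ℓ₁)
    (ht2 : ∃ t, a t = j * m + ℓ₂ ∧ b t = (j + 1) * m + 1 - ℓ₂) :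
    ℓ₁ = ℓ₂ := by
  obtain ⟨t1, ha1, hb1⟩ := ht1
  obtain ⟨t2, ha2, hb2⟩ := ht2
  simp only [Finset.mem_Icc] at h1 h2
  have hjm : (j + 1) * m = j * m + m := by ring
  rw [hjm] at hb1 hb2
  rcases le_total t1 t2 with h | h
  · have hA := ha h
    have hB := hb h
    rw [ha1, ha2] at hA
    rw [hb1, hb2] at hB
    omega
  · have hA := ha h
    have hB := hb h
    rw [ha1, ha2] at hA
    rw [hb1, hb2] at hB
    omega
end
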